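/- Let G = W(C_6) be the whisker graph of the 6-cycle on vertices x_1,...,x_6 with whiskers y_1,...,y_6. Then the link of the face F = {x_1,...,x_6} in MF^4(G) is the independence complex of the complete bipartite graph K_{3,3} with bipartition {y_1,y_3,y_5} and {y_2,y_4,y_6}. Consequently MF^4(G) is not shellable. -/

import Mathlib

variable {V : Type*}

/-- `M` is a set of pairwise disjoint edges of `G` with all endpoints in `F`. -/
def IsMatchingOn (G : SimpleGraph V) (F : Finset V) (M : Finset (Sym2 V)) : Prop :=
  (∀ e ∈ M, e ∈ G.edgeSet) ∧
  (∀ e ∈ M, ∀ v ∈ e, v ∈ F) ∧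
  (∀ e ∈ M, ∀ e' ∈ M, e ≠ e' → ∀ v ∈ e, v ∉ e')

/-- `F` is a face of the `q`-matching-free complex `MF^q(G)`. -/
def MFFace (G : SimpleGraph V) (q : ℕ) (F : Finset V) : Prop :=
  ¬ ∃ M : Finset (Sym2 V), IsMatchingOn G F M ∧ M.card = q

/-- `F` is a facet (maximal face) of the complex with face predicate `faces`. -/
def IsFacet (faces : Finset V → Prop) (F : Finset V) : Prop :=
  faces F ∧ ∀ F', faces F' → F ⊆ F' → F = F'

/-- Even-connection of `u` and `v` with respect to the pairwise disjoint edges in `M`. -/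
def EvenConnected (G : SimpleGraph V) (M : Finset (Sym2 V)) (u v : V) : Prop :=
  ∃ (r : ℕ) (p : ℕ → V), 1 ≤ r ∧ p 0 = u ∧ p (2 * r + 1) = v ∧
    (∀ k, k ≤ 2 * r → G.Adj (p k) (p (k + 1))) ∧
    (∀ k, k < r → s(p (2 * k + 1), p (2 * k + 2)) ∈ M) ∧
    (∀ k l, k < r → l < r →
      s(p (2 * k + 1), p (2 * k + 2)) = s(p (2 * l + 1), p (2 * l + 2)) → k = l)

/-- The set of vertices covered by the edges in `M`. -/
def mSupp (M : Finset (Sym2 V)) : Set V := {v | ∃ e ∈ M, v ∈ e}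

/-- The even-connection graph `G^{e₁⋯e_q}` (vertices covered by `M` are isolated). -/
def evenConnGraph (G : SimpleGraph V) (M : Finset (Sym2 V)) : SimpleGraph V where
  Adj x y := x ≠ y ∧ x ∉ mSupp M ∧ y ∉ mSupp M ∧
    (G.Adj x y ∨ EvenConnected G M x y ∨ EvenConnected G M y x)
  symm := by
    constructor
    rintro x y ⟨hne, hx, hy, h⟩
    refine ⟨hne.symm, hy, hx, ?_⟩
    rcases h with h | h | h
    · exact Or.inl h.symm
    · exact Or.inr (Or.inr h)
    · exact Or.inr (Or.inl h)
  loopless := ⟨fun x h => h.1 rfl⟩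

/-- Delete a set of vertices from a graph (keeping them as isolated vertices). -/
def delSet (G : SimpleGraph V) (S : Set V) : SimpleGraph V where
  Adj x y := G.Adj x y ∧ x ∉ S ∧ y ∉ S
  symm := ⟨fun x y ⟨h, hx, hy⟩ => ⟨h.symm, hy, hx⟩⟩
  loopless := ⟨fun x ⟨h, _, _⟩ => G.loopless.irrefl x h⟩

/-- The whisker graph `W(H)`: each vertex `x` (as `Sum.inl x`) gets a pendant
whisker vertex `Sum.inr x`. -/
def whisker (H : SimpleGraph V) : SimpleGraph (V ⊕ V) where
  Adj x y :=
    (∃ a b, x = Sum.inl a ∧ y = Sum.inl b ∧ H.Adj a b) ∨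
    (∃ a, (x = Sum.inl a ∧ y = Sum.inr a) ∨ (x = Sum.inr a ∧ y = Sum.inl a))
  symm := by
    constructor
    rintro x y (⟨a, b, hx, hy, hab⟩ | ⟨a, h | h⟩)
    · exact Or.inl ⟨b, a, hy, hx, hab.symm⟩
    · exact Or.inr ⟨a, Or.inr ⟨h.2, h.1⟩⟩
    · exact Or.inr ⟨a, Or.inl ⟨h.2, h.1⟩⟩
  loopless := by
    constructor
    rintro x (⟨a, b, hx, hy, hab⟩ | ⟨a, ⟨h1, h2⟩ | ⟨h1, h2⟩⟩)
    · obtain rfl := Sum.inl_injective (hx ▸ hy : (Sum.inl a : V ⊕ V) = Sum.inl b)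
      exact H.loopless.irrefl a hab
    · exact Sum.inl_ne_inr (h1 ▸ h2 : (Sum.inl a : V ⊕ V) = Sum.inr a)
    · exact Sum.inr_ne_inl (h1 ▸ h2 : (Sum.inr a : V ⊕ V) = Sum.inl a)

/-- Shellability of the complex with face predicate `faces`: there is a linear
order `F 0, F 1, …` of all facets such that each facet meets the union of the
previous ones in a pure subcomplex of codimension one. -/
def Shellable (faces : Finset V → Prop) : Prop :=
  ∃ (t : ℕ) (F : Fin t → Finset V),
    (∀ i, IsFacet faces (F i)) ∧
    (∀ F', IsFacet faces F' → ∃ i, F' = F i) ∧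
    Function.Injective F ∧
    ∀ k : Fin t, 0 < (k : ℕ) → ∀ σ : Finset V, σ ⊆ F k →
      (∃ i, i < k ∧ σ ⊆ F i) →
      ∃ τ : Finset V, σ ⊆ τ ∧ τ ⊆ F k ∧ (∃ i, i < k ∧ τ ⊆ F i) ∧
        τ.card = (F k).card - 1

/-- Vertex decomposability of the complex with face predicate `faces`. -/
inductive VertexDecomposable [DecidableEq V] : (Finset V → Prop) → Prop
  | simplex (faces : Finset V → Prop) (F : Finset V)
      (h : ∀ F', faces F' ↔ F' ⊆ F) : VertexDecomposable faces
  | shed (faces : Finset V → Prop) (v : V)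
      (hdel : VertexDecomposable (fun F => faces F ∧ v ∉ F))
      (hlink : VertexDecomposable (fun F => v ∉ F ∧ faces (insert v F)))
      (hshed : ∀ F, v ∉ F → faces (insert v F) →
        ¬ IsFacet (fun F' => faces F' ∧ v ∉ F') F) :
      VertexDecomposable faces

/-- The cycle of length 6. -/
def C6 : SimpleGraph (Fin 6) where
  Adj i j := j = i + 1 ∨ i = j + 1
  symm := ⟨fun _ _ h => h.symm⟩
  loopless := by constructor; intro i h; rcases h with h | h <;> exact absurd (congrArg (· - i) h.symm) (by simpa using one_ne_zero)

/-!
If all whiskers `y_i` in `F ⊇ X = {x₁,…,x₆}` have the same parity `p`, the three cycle vertices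
`x_i` with `i ≡ p` cover every edge of `W(C₆)[F]` (cycle edges join opposite parities), so `F`
carries no 4-matching. If `y_i, y_j ∈ F` have opposite parity, `C₆ - {x_i, x_j}` splits into two
paths with an even number of vertices each; their perfect matchings together with `x_iy_i` and
`x_jy_j` form a 4-matching. So the link of `X` is the independence complex of `K₃,₃`, and exactly
two facets contain `X`, meeting only in `X`. A shelling would have to attach the later of the two
to the earlier along a codimension-one face containing `X`, which is impossible.
-/

open Finset

theorem IsMatchingOn.mono {G : SimpleGraph V} {F F' : Finset V} {M : Finset (Sym2 V)}
    (hM : IsMatchingOn G F M) (h : F ⊆ F') : IsMatchingOn G F' M :=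
  ⟨hM.1, fun e he v hv => h (hM.2.1 e he v hv), hM.2.2⟩

theorem IsMatchingOn.card_le_of_isCover {G : SimpleGraph V} {F T : Finset V}
    {M : Finset (Sym2 V)} (hM : IsMatchingOn G F M)
    (hT : ∀ u v, G.Adj u v → u ∈ F → v ∈ F → u ∈ T ∨ v ∈ T) : #M ≤ #T := by
  obtain ⟨hedge, hsupp, hdisj⟩ := hM
  refine card_le_card_of_forall_subsingleton (fun e v => v ∈ e) (fun e he => ?_) (fun v _ => ?_)
  · induction e using Sym2.ind with
    | h u v =>
      rcases hT u v (hedge _ he) (hsupp _ he u (Sym2.mem_mk_left u v))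
          (hsupp _ he v (Sym2.mem_mk_right u v)) with hu | hv
      · exact ⟨u, hu, Sym2.mem_mk_left u v⟩
      · exact ⟨v, hv, Sym2.mem_mk_right u v⟩
  · rintro e ⟨he, hve⟩ e' ⟨he', hve'⟩
    by_contra hne
    exact hdisj e he e' he' hne v hve hve'

theorem mfFace_of_isCover {G : SimpleGraph V} {F T : Finset V} {q : ℕ}
    (hT : ∀ u v, G.Adj u v → u ∈ F → v ∈ F → u ∈ T ∨ v ∈ T) (hq : #T < q) : MFFace G q F := by
  rintro ⟨M, hM, rfl⟩
  exact (hM.card_le_of_isCover hT).not_gt hq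

theorem not_shellable_of_two_facets [DecidableEq V] {faces : Finset V → Prop} {σ A B : Finset V}
    (hA : IsFacet faces A) (hB : IsFacet faces B) (hAB : A ≠ B) (hσA : σ ⊆ A) (hσB : σ ⊆ B)
    (hcover : ∀ F, IsFacet faces F → σ ⊆ F → F = A ∨ F = B)
    (hA_card : #(A ∩ B) + 1 < #A) (hB_card : #(A ∩ B) + 1 < #B) : ¬ Shellable faces := by
  rintro ⟨t, F, hF, hsurj, hinj, hshell⟩
  obtain ⟨a, rfl⟩ := hsurj A hA
  obtain ⟨b, rfl⟩ := hsurj B hB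
  wlog hab : a < b generalizing a b
  · refine this b hB hσB a hA hσA hAB.symm (fun F' h h' => (hcover F' h h').symm)
      (by rwa [inter_comm]) (by rwa [inter_comm]) ?_
    exact lt_of_le_of_ne (not_lt.1 hab) fun h => hAB (h ▸ rfl)
  obtain ⟨τ, hστ, hτb, ⟨j, hjb, hτj⟩, hτ⟩ :=
    hshell b (lt_of_le_of_lt (Nat.zero_le a) hab) σ hσB ⟨a, hab, hσA⟩
  have hja : F j = F a := by
    rcases hcover (F j) (hF j) (hστ.trans hτj) with h | h
    · exact h
    · exact absurd (hinj h) hjb.ne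
  have := card_le_card (subset_inter (hja ▸ hτj) hτb)
  omega

section Whisker

variable {H : SimpleGraph V} {a b : V}

@[simp] theorem whisker_adj_inl_inl : (whisker H).Adj (.inl a) (.inl b) ↔ H.Adj a b := by
  simp [whisker]

@[simp] theorem whisker_adj_inl_inr : (whisker H).Adj (.inl a) (.inr b) ↔ a = b := by
  simp [whisker, eq_comm]

@[simp] theorem whisker_adj_inr_inl : (whisker H).Adj (.inr a) (.inl b) ↔ a = b := by
  simp [whisker, eq_comm]

@[simp] theorem not_whisker_adj_inr_inr : ¬ (whisker H).Adj (.inr a) (.inr b) := by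
  simp [whisker]

instance [DecidableEq V] [DecidableRel H.Adj] : DecidableRel (whisker H).Adj
  | .inl _, .inl _ => decidable_of_iff _ whisker_adj_inl_inl.symm
  | .inl _, .inr _ => decidable_of_iff _ whisker_adj_inl_inr.symm
  | .inr _, .inl _ => decidable_of_iff _ whisker_adj_inr_inl.symm
  | .inr _, .inr _ => isFalse not_whisker_adj_inr_inr

theorem whisker_isCover [DecidableEq V] {T : Finset V} {F : Finset (V ⊕ V)}
    (hH : ∀ a b, H.Adj a b → a ∈ T ∨ b ∈ T) (hF : ∀ a, .inr a ∈ F → a ∈ T) :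
    ∀ u v, (whisker H).Adj u v → u ∈ F → v ∈ F →
      u ∈ T.image Sum.inl ∨ v ∈ T.image Sum.inl := by
  rintro (a | a) (b | b) hab hu hv
  · simpa using hH a b (whisker_adj_inl_inl.1 hab)
  · obtain rfl := whisker_adj_inl_inr.1 hab
    simpa using hF a hv
  · obtain rfl := whisker_adj_inr_inl.1 hab
    simpa using hF a hu
  · exact absurd hab not_whisker_adj_inr_inr

end Whisker

theorem disjoint_univ_image_inl_iff [Fintype V] [DecidableEq V] {W : Type*} [DecidableEq W]
    {F : Finset (V ⊕ W)} : Disjoint F (univ.image Sum.inl) ↔ ∀ z ∈ F, ∃ i, z = Sum.inr i := by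
  simp [disjoint_right]

instance : DecidableRel C6.Adj := fun i j => inferInstanceAs (Decidable (j = i + 1 ∨ i = j + 1))

theorem mod_two_ne_of_C6_adj : ∀ a b : Fin 6, C6.Adj a b → (a : ℕ) % 2 ≠ (b : ℕ) % 2 := by
  decide

theorem Fin.exists_mod_two_eq {n : ℕ} {P : Fin n → Prop}
    (h : ∀ i j, P i → P j → (i : ℕ) % 2 = (j : ℕ) % 2) :
    ∃ p < 2, ∀ i, P i → (i : ℕ) % 2 = p := by
  by_cases hP : ∃ i, P i
  · obtain ⟨i, hi⟩ := hP
    exact ⟨(i : ℕ) % 2, Nat.mod_lt _ two_pos, fun j hj => h j i hj hi⟩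
  · push Not at hP
    exact ⟨0, two_pos, fun i hi => absurd hi (hP i)⟩

def parityClass (p : ℕ) : Finset (Fin 6) := univ.filter fun i => (i : ℕ) % 2 = p

theorem card_parityClass {p : ℕ} (hp : p < 2) : #(parityClass p) = 3 := by
  interval_cases p <;> rfl

theorem parityClass_isCover {p : ℕ} (hp : p < 2) :
    ∀ a b, C6.Adj a b → a ∈ parityClass p ∨ b ∈ parityClass p := by
  intro a b hab
  have := mod_two_ne_of_C6_adj a b hab
  simp only [parityClass, mem_filter, mem_univ, true_and]
  omega

def crossMatching (i j : Fin 6) : Finset (Sym2 (Fin 6 ⊕ Fin 6)) :=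
  {s(.inl i, .inr i), s(.inl j, .inr j)} ∪
    if j = i + 1 then {s(.inl (i + 2), .inl (i + 3)), s(.inl (i + 4), .inl (i + 5))}
    else if j = i + 3 then {s(.inl (i + 1), .inl (i + 2)), s(.inl (i + 4), .inl (i + 5))}
    else {s(.inl (i + 1), .inl (i + 2)), s(.inl (i + 3), .inl (i + 4))}

set_option synthInstance.maxSize 1024 in
set_option maxRecDepth 8000 in
theorem isMatchingOn_crossMatching : ∀ i j : Fin 6, (i : ℕ) % 2 ≠ (j : ℕ) % 2 →
    IsMatchingOn (whisker C6) ({.inr i, .inr j} ∪ univ.image Sum.inl) (crossMatching i j) ∧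
      #(crossMatching i j) = 4 := by
  unfold IsMatchingOn
  decide

theorem mfFace_union_iff (F' : Finset (Fin 6 ⊕ Fin 6)) :
    MFFace (whisker C6) 4 (F' ∪ univ.image Sum.inl) ↔
      ∀ i j : Fin 6, .inr i ∈ F' → .inr j ∈ F' → (i : ℕ) % 2 = (j : ℕ) % 2 := by
  constructor
  · intro hF i j hi hj
    by_contra hij
    obtain ⟨hM, hcard⟩ := isMatchingOn_crossMatching i j hij
    refine hF ⟨_, hM.mono ?_, hcard⟩
    exact union_subset_union (insert_subset hi (singleton_subset_iff.2 hj)) subset_rfl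
  · intro hpar
    obtain ⟨p, hp, hF'⟩ := Fin.exists_mod_two_eq hpar
    refine mfFace_of_isCover (whisker_isCover (parityClass_isCover hp) fun a ha => ?_) ?_
    · simpa [parityClass] using hF' a (by simpa using ha)
    · rw [card_image_of_injective _ Sum.inl_injective, card_parityClass hp]
      norm_num

theorem mfFace_link_iff (F' : Finset (Fin 6 ⊕ Fin 6)) :
    (Disjoint F' (univ.image Sum.inl) ∧ MFFace (whisker C6) 4 (F' ∪ univ.image Sum.inl)) ↔
      (∀ z ∈ F', ∃ i : Fin 6, z = .inr i) ∧
        ∀ i j : Fin 6, .inr i ∈ F' → .inr j ∈ F' → (i : ℕ) % 2 = (j : ℕ) % 2 := by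
  rw [disjoint_univ_image_inl_iff, mfFace_union_iff]

def parityFacet (p : ℕ) : Finset (Fin 6 ⊕ Fin 6) :=
  (parityClass p).image Sum.inr ∪ univ.image Sum.inl

theorem mfFace_parityFacet (p : ℕ) : MFFace (whisker C6) 4 (parityFacet p) := by
  rw [parityFacet, mfFace_union_iff]
  intro i j hi hj
  simp only [parityClass, mem_image, mem_filter, mem_univ, true_and, Sum.inr.injEq] at hi hj
  obtain ⟨_, hi, rfl⟩ := hi
  obtain ⟨_, hj, rfl⟩ := hj
  rw [hi, hj]

theorem subset_parityFacet {F : Finset (Fin 6 ⊕ Fin 6)} (hX : univ.image Sum.inl ⊆ F)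
    (hF : MFFace (whisker C6) 4 F) : ∃ p < 2, F ⊆ parityFacet p := by
  rw [← union_eq_left.2 hX, mfFace_union_iff] at hF
  obtain ⟨p, hp, hpar⟩ := Fin.exists_mod_two_eq hF
  refine ⟨p, hp, ?_⟩
  rintro (a | a) ha
  · simp [parityFacet]
  · simp [parityFacet, parityClass, hpar a ha]

theorem eq_parityFacet_of_isFacet {F : Finset (Fin 6 ⊕ Fin 6)}
    (hF : IsFacet (MFFace (whisker C6) 4) F) (hX : univ.image Sum.inl ⊆ F) :
    F = parityFacet 0 ∨ F = parityFacet 1 := by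
  obtain ⟨p, hp, hFp⟩ := subset_parityFacet hX hF.1
  have := hF.2 _ (mfFace_parityFacet p) hFp
  interval_cases p <;> simp [this]

theorem isFacet_parityFacet {p : ℕ} (hp : p < 2) :
    IsFacet (MFFace (whisker C6) 4) (parityFacet p) := by
  refine ⟨mfFace_parityFacet p, fun F hF hpF => ?_⟩
  obtain ⟨q, hq, hFq⟩ := subset_parityFacet (subset_union_right.trans hpF) hF
  have hpq : parityFacet p ⊆ parityFacet q := hpF.trans hFq
  obtain rfl : p = q := by
    interval_cases p <;> interval_cases q <;> first | rfl | exact absurd hpq (by decide)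
  exact hpF.antisymm hFq

/-- the link of the face `{x₁,…,x₆}` in `MF^4(W(C₆))` is the
independence complex of `K₃,₃` on the whisker vertices (bipartition by the parity
of the index), and consequently `MF^4(W(C₆))` is not shellable. -/
theorem mfComplex_whisker_C6_link_and_not_shellable :
    (∀ F' : Finset (Fin 6 ⊕ Fin 6),
      (Disjoint F' (Finset.univ.image Sum.inl) ∧
        MFFace (whisker C6) 4 (F' ∪ Finset.univ.image Sum.inl)) ↔
      ((∀ z ∈ F', ∃ i : Fin 6, z = Sum.inr i) ∧
        ∀ i j : Fin 6, Sum.inr i ∈ F' → Sum.inr j ∈ F' →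
          (i : ℕ) % 2 = (j : ℕ) % 2)) ∧
    ¬ Shellable (MFFace (whisker C6) 4) := by
  refine ⟨mfFace_link_iff, ?_⟩
  have hcard : #(parityFacet 0 ∩ parityFacet 1) = 6 ∧ #(parityFacet 0) = 9 ∧
      #(parityFacet 1) = 9 := by decide
  exact not_shellable_of_two_facets (isFacet_parityFacet two_pos) (isFacet_parityFacet one_lt_two)
    (by decide) subset_union_right subset_union_right (fun _ => eq_parityFacet_of_isFacet)
    (by omega) (by omega)
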